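/- Let (A,B) be a nonempty, bounded, closed and convex pair in a reflexive and strictly convex Banach space X and let T : A ∪ B → A ∪ B be a noncyclic relatively nonexpansive mapping. Then T and the proximity projection P commute on A₀ ∪ B₀: for every x ∈ A₀, if u is the unique point of B₀ with ‖x−u‖ = dist(A,B), then Tu is the unique point of B₀ with ‖Tx − Tu‖ = dist(A,B); that is, P(Tx) = T(Px) for all x ∈ A₀ ∪ B₀. -/

import Mathlib

open Set

/-- `setDist A B = inf {‖x - y‖ : x ∈ A, y ∈ B}`. -/
noncomputable def setDist {X : Type*} [NormedAddCommGroup X] (A B : Set X) : ℝ :=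
  sInf ((fun p : X × X => ‖p.1 - p.2‖) '' (A ×ˢ B))

/-- `A₀ = {x ∈ A : ‖x - y‖ = dist(A,B) for some y ∈ B}`. -/
noncomputable def proxA {X : Type*} [NormedAddCommGroup X] (A B : Set X) : Set X :=
  {x ∈ A | ∃ y ∈ B, ‖x - y‖ = setDist A B}

/-- `B₀ = {y ∈ B : ‖x - y‖ = dist(A,B) for some x ∈ A}`. -/
noncomputable def proxB {X : Type*} [NormedAddCommGroup X] (A B : Set X) : Set X :=
  {y ∈ B | ∃ x ∈ A, ‖x - y‖ = setDist A B}

/-!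
A relatively nonexpansive `T` cannot increase the distance `dist(A, B)` of a proximal pair
`(x, u)`, and being noncyclic it cannot decrease it either, so `(T x, T u)` is again a proximal
pair. Strict convexity together with convexity of `B` makes the proximal point of `T x` in `B`
unique: two distinct ones would have a midpoint in `B` strictly closer to `T x`. The statement
for `B₀` is the one for `A₀` applied to the swapped pair `(B, A)`.
-/

section

variable {X : Type*} [NormedAddCommGroup X]

lemma setDist_le_norm_sub {A B : Set X} {x y : X} (hx : x ∈ A) (hy : y ∈ B) :
    setDist A B ≤ ‖x - y‖ :=
  csInf_le ⟨0, by rintro r ⟨p, -, rfl⟩; exact norm_nonneg _⟩ ⟨(x, y), ⟨hx, hy⟩, rfl⟩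

lemma setDist_comm (A B : Set X) : setDist B A = setDist A B := by
  unfold setDist
  congr 1
  ext r
  constructor <;>
  · rintro ⟨⟨a, b⟩, ⟨ha, hb⟩, rfl⟩
    exact ⟨(b, a), ⟨hb, ha⟩, norm_sub_rev _ _⟩

lemma proxB_swap (A B : Set X) : proxB B A = proxA A B := by
  ext x
  simp only [proxA, proxB, setDist_comm, norm_sub_rev _ x, mem_ofPred_eq]

lemma norm_map_sub_map_eq_setDist {A B : Set X} {T : X → X}
    (hTA : MapsTo T A A) (hTB : MapsTo T B B) (hT : ∀ x ∈ A, ∀ y ∈ B, ‖T x - T y‖ ≤ ‖x - y‖)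
    {x u : X} (hx : x ∈ A) (hu : u ∈ B) (hxu : ‖x - u‖ = setDist A B) :
    ‖T x - T u‖ = setDist A B :=
  le_antisymm (hxu ▸ hT x hx u hu) (setDist_le_norm_sub (hTA hx) (hTB hu))

lemma eq_of_norm_sub_eq_of_forall_le_norm_sub [NormedSpace ℝ X] [StrictConvexSpace ℝ X]
    {s : Set X} (hs : Convex ℝ s) {p w₁ w₂ : X} {d : ℝ} (hd : ∀ z ∈ s, d ≤ ‖p - z‖)
    (hw₁ : w₁ ∈ s) (hw₂ : w₂ ∈ s) (h₁ : ‖p - w₁‖ = d) (h₂ : ‖p - w₂‖ = d) : w₁ = w₂ := by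
  by_contra hne
  have hmid : (1 / 2 : ℝ) • w₁ + (1 / 2 : ℝ) • w₂ ∈ s :=
    hs hw₁ hw₂ (by norm_num) (by norm_num) (by norm_num)
  have hball : (1 / 2 : ℝ) • w₁ + (1 / 2 : ℝ) • w₂ ∈ Metric.ball p d :=
    combo_mem_ball_of_ne (by rw [mem_closedBall_iff_norm', h₁])
      (by rw [mem_closedBall_iff_norm', h₂]) hne (by norm_num) (by norm_num) (by norm_num)
  rw [mem_ball_iff_norm'] at hball
  exact (hd _ hmid).not_gt hball

lemma map_proximal_pair_unique [NormedSpace ℝ X] [StrictConvexSpace ℝ X] {A B : Set X}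
    (hBconv : Convex ℝ B) {T : X → X} (hTA : MapsTo T A A) (hTB : MapsTo T B B)
    (hT : ∀ x ∈ A, ∀ y ∈ B, ‖T x - T y‖ ≤ ‖x - y‖)
    {x u : X} (hx : x ∈ A) (hu : u ∈ B) (hxu : ‖x - u‖ = setDist A B) :
    T u ∈ proxB A B ∧ ‖T x - T u‖ = setDist A B ∧
      ∀ w ∈ B, ‖T x - w‖ = setDist A B → w = T u := by
  have hT_prox := norm_map_sub_map_eq_setDist hTA hTB hT hx hu hxu
  refine ⟨⟨hTB hu, T x, hTA hx, hT_prox⟩, hT_prox, fun w hw hTw => ?_⟩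
  exact eq_of_norm_sub_eq_of_forall_le_norm_sub hBconv
    (fun z hz => setDist_le_norm_sub (hTA hx) hz) hw (hTB hu) hTw hT_prox

end

theorem noncyclic_commutes_with_proximity_projection_general
    {X : Type*} [NormedAddCommGroup X] [NormedSpace ℝ X]
    [StrictConvexSpace ℝ X]
    (A B : Set X)
    (hAconv : Convex ℝ A) (hBconv : Convex ℝ B)
    (T : X → X) (hTA : MapsTo T A A) (hTB : MapsTo T B B)
    (hT : ∀ x ∈ A, ∀ y ∈ B, ‖T x - T y‖ ≤ ‖x - y‖) :
    (∀ x ∈ proxA A B, ∀ u ∈ proxB A B, ‖x - u‖ = setDist A B →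
      T u ∈ proxB A B ∧ ‖T x - T u‖ = setDist A B ∧
        ∀ w ∈ proxB A B, ‖T x - w‖ = setDist A B → w = T u) ∧
    (∀ y ∈ proxB A B, ∀ v ∈ proxA A B, ‖v - y‖ = setDist A B →
      T v ∈ proxA A B ∧ ‖T v - T y‖ = setDist A B ∧
        ∀ w ∈ proxA A B, ‖w - T y‖ = setDist A B → w = T v) := by
  have hT' : ∀ y ∈ B, ∀ x ∈ A, ‖T y - T x‖ ≤ ‖y - x‖ := fun y hy x hx => by
    rw [norm_sub_rev, norm_sub_rev y]
    exact hT x hx y hy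
  refine ⟨fun x hx u hu hxu => ?_, fun y hy v hv hvy => ?_⟩
  · obtain ⟨hTu, hTxu, huniq⟩ := map_proximal_pair_unique hBconv hTA hTB hT hx.1 hu.1 hxu
    exact ⟨hTu, hTxu, fun w hw => huniq w hw.1⟩
  · rw [← setDist_comm, norm_sub_rev] at hvy
    obtain ⟨hTv, hTyv, huniq⟩ := map_proximal_pair_unique hAconv hTB hTA hT' hy.1 hv.1 hvy
    rw [proxB_swap] at hTv
    rw [setDist_comm, norm_sub_rev] at hTyv
    rw [setDist_comm] at huniq
    exact ⟨hTv, hTyv, fun w hw hwTy => huniq w hw.1 (by rwa [norm_sub_rev])⟩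

/-- A noncyclic relatively nonexpansive mapping `T` commutes with the proximity projection
`P` on `A₀ ∪ B₀`: if `u` is the unique proximal point of `x` in the opposite set, then `T u`
is the unique proximal point of `T x`, i.e. `P (T x) = T (P x)`. -/
theorem noncyclic_commutes_with_proximity_projection
    {X : Type*} [NormedAddCommGroup X] [NormedSpace ℝ X] [CompleteSpace X]
    [StrictConvexSpace ℝ X]
    (hrefl : Function.Surjective (NormedSpace.inclusionInDoubleDual ℝ X))
    (A B : Set X) (hA : A.Nonempty) (hB : B.Nonempty)
    (hAbd : Bornology.IsBounded A) (hBbd : Bornology.IsBounded B)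
    (hAcl : IsClosed A) (hBcl : IsClosed B)
    (hAconv : Convex ℝ A) (hBconv : Convex ℝ B)
    (T : X → X) (hTA : MapsTo T A A) (hTB : MapsTo T B B)
    (hT : ∀ x ∈ A, ∀ y ∈ B, ‖T x - T y‖ ≤ ‖x - y‖) :
    (∀ x ∈ proxA A B, ∀ u ∈ proxB A B, ‖x - u‖ = setDist A B →
      T u ∈ proxB A B ∧ ‖T x - T u‖ = setDist A B ∧
        ∀ w ∈ proxB A B, ‖T x - w‖ = setDist A B → w = T u) ∧
    (∀ y ∈ proxB A B, ∀ v ∈ proxA A B, ‖v - y‖ = setDist A B →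
      T v ∈ proxA A B ∧ ‖T v - T y‖ = setDist A B ∧
        ∀ w ∈ proxA A B, ‖w - T y‖ = setDist A B → w = T v) :=
  noncyclic_commutes_with_proximity_projection_general A B hAconv hBconv T hTA hTB hT
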